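/- arXiv:0901.0667 — 5 statements merged into one kernel-verified Lean document; each statement's English description precedes it below -/
import Mathlib

section
/- Suppose t ≤ 5. Let K be a field and let x ∈ u_K(d). Then the centralizer C_{U_K(d)}(x) has a finite normal series each of whose successive quotients is isomorphic to the additive group (K, +). -/
open Matrix

/-- The coordinate subspace of `K^n` spanned by the first `m` standard basis vectors. -/
def coordSub (K : Type*) [Field K] (n m : ℕ) : Submodule K (Fin n → K) where
  carrier := {v | ∀ j : Fin n, m ≤ (j : ℕ) → v j = 0}
  add_mem' := by intro a b ha hb j hj; simp [ha j hj, hb j hj]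
  zero_mem' := by intro j hj; rfl
  smul_mem' := by intro c v hv j hj; simp [hv j hj]

lemma coordSub_mono (K : Type*) [Field K] (n : ℕ) {m m' : ℕ} (h : m ≤ m') :
    coordSub K n m ≤ coordSub K n m' := fun v hv j hj => hv j (le_trans h hj)

lemma coordSub_zero (K : Type*) [Field K] (n : ℕ) {v : Fin n → K}
    (hv : v ∈ coordSub K n 0) : v = 0 := funext fun j => hv j (Nat.zero_le _)

/-- The parabolic subgroup of `GL n K` stabilizing the flag of coordinate subspaces
of dimensions `d 1 ≤ d 2 ≤ ... ≤ d t`. -/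
def flagP (K : Type*) [Field K] (n t : ℕ) (d : ℕ → ℕ) : Subgroup (GL (Fin n) K) where
  carrier := {g | ∀ i, 1 ≤ i → i ≤ t →
    Submodule.map (Matrix.mulVecLin (g : Matrix (Fin n) (Fin n) K)) (coordSub K n (d i))
      = coordSub K n (d i)}
  one_mem' := by
    intro i h1 h2
    simp
  mul_mem' := by
    intro a b ha hb i h1 h2
    have hab : ((↑(a * b) : Matrix (Fin n) (Fin n) K))
        = (↑a : Matrix (Fin n) (Fin n) K) * (↑b : Matrix (Fin n) (Fin n) K) := rfl
    rw [Set.mem_setOf_eq] at *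
    rw [hab, Matrix.mulVecLin_mul, Submodule.map_comp, hb i h1 h2, ha i h1 h2]
  inv_mem' := by
    intro a ha i h1 h2
    rw [Set.mem_setOf_eq] at *
    conv_lhs => rw [← ha i h1 h2]
    rw [← Submodule.map_comp, ← Matrix.mulVecLin_mul, Units.inv_mul, Matrix.mulVecLin_one,
      Submodule.map_id]

section flagU

variable {K : Type*} [Field K] {n t : ℕ} {d : ℕ → ℕ}

private lemma flagU_carrier_stab (h0 : d 0 = 0) (hd : Monotone d) {a : GL (Fin n) K}
    (ha : ∀ i, 1 ≤ i → i ≤ t → ∀ v ∈ coordSub K n (d i),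
      ((a : Matrix (Fin n) (Fin n) K) - 1).mulVec v ∈ coordSub K n (d (i - 1)))
    {i : ℕ} (hi : i ≤ t) {w : Fin n → K} (hw : w ∈ coordSub K n (d i)) :
    (a : Matrix (Fin n) (Fin n) K).mulVec w ∈ coordSub K n (d i) := by
  rcases Nat.eq_zero_or_pos i with h | h
  · subst h
    rw [h0] at hw
    rw [coordSub_zero K n hw, Matrix.mulVec_zero]
    exact Submodule.zero_mem _
  · have key : (a : Matrix (Fin n) (Fin n) K).mulVec w
        = ((a : Matrix (Fin n) (Fin n) K) - 1).mulVec w + w := by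
      rw [Matrix.sub_mulVec, Matrix.one_mulVec, sub_add_cancel]
    rw [key]
    exact Submodule.add_mem _
      (coordSub_mono K n (hd (Nat.sub_le i 1)) (ha i h hi w hw)) hw

private lemma flagU_carrier_inv_stab (h0 : d 0 = 0) (hd : Monotone d) {a : GL (Fin n) K}
    (ha : ∀ i, 1 ≤ i → i ≤ t → ∀ v ∈ coordSub K n (d i),
      ((a : Matrix (Fin n) (Fin n) K) - 1).mulVec v ∈ coordSub K n (d (i - 1)))
    {i : ℕ} (hi : i ≤ t) {w : Fin n → K} (hw : w ∈ coordSub K n (d i)) :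
    ((a⁻¹ : GL (Fin n) K) : Matrix (Fin n) (Fin n) K).mulVec w ∈ coordSub K n (d i) := by
  set f := Matrix.mulVecLin (a : Matrix (Fin n) (Fin n) K) with hf
  have hinj : Function.Injective f := by
    have : Function.LeftInverse
        (Matrix.mulVecLin ((a⁻¹ : GL (Fin n) K) : Matrix (Fin n) (Fin n) K)) f := by
      intro v
      simp only [hf, Matrix.mulVecLin_apply, Matrix.mulVec_mulVec, Units.inv_mul,
        Matrix.one_mulVec]
    exact this.injective
  have hle : Submodule.map f (coordSub K n (d i)) ≤ coordSub K n (d i) := by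
    rintro y ⟨v, hv, rfl⟩
    exact flagU_carrier_stab h0 hd ha hi hv
  have heq : Submodule.map f (coordSub K n (d i)) = coordSub K n (d i) := by
    apply Submodule.eq_of_le_of_finrank_le hle
    rw [LinearEquiv.finrank_eq (Submodule.equivMapOfInjective f hinj (coordSub K n (d i)))]
  rw [← heq] at hw
  rcases hw with ⟨v, hv, rfl⟩
  have : ((a⁻¹ : GL (Fin n) K) : Matrix (Fin n) (Fin n) K).mulVec (f v) = v := by
    simp only [hf, Matrix.mulVecLin_apply, Matrix.mulVec_mulVec, Units.inv_mul,
      Matrix.one_mulVec]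
  rwa [this]

/-- The unipotent radical of the parabolic subgroup of `GL n K` stabilizing the flag of
coordinate subspaces of dimensions `d 1 ≤ ... ≤ d t`: all `u` with
`(u - 1) V i ⊆ V (i-1)` for each `i`. -/
def flagU (K : Type*) [Field K] (n t : ℕ) (d : ℕ → ℕ) (h0 : d 0 = 0) (hd : Monotone d) :
    Subgroup (GL (Fin n) K) where
  carrier := {g | ∀ i, 1 ≤ i → i ≤ t → ∀ v ∈ coordSub K n (d i),
    ((g : Matrix (Fin n) (Fin n) K) - 1).mulVec v ∈ coordSub K n (d (i - 1))}
  one_mem' := by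
    intro i h1 h2 v hv
    simp only [Units.val_one, sub_self, Matrix.zero_mulVec]
    exact Submodule.zero_mem _
  mul_mem' := by
    intro a b ha hb i h1 h2 v hv
    rw [Set.mem_setOf_eq] at ha hb
    have hab : ((↑(a * b) : Matrix (Fin n) (Fin n) K))
        = (↑a : Matrix (Fin n) (Fin n) K) * (↑b : Matrix (Fin n) (Fin n) K) := rfl
    have key : ((↑(a * b) : Matrix (Fin n) (Fin n) K) - 1).mulVec v
        = (↑a : Matrix (Fin n) (Fin n) K).mulVec
            (((↑b : Matrix (Fin n) (Fin n) K) - 1).mulVec v)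
          + ((↑a : Matrix (Fin n) (Fin n) K) - 1).mulVec v := by
      rw [hab, Matrix.mulVec_mulVec, ← Matrix.add_mulVec]
      congr 1
      noncomm_ring
    rw [key]
    refine Submodule.add_mem _ ?_ (ha i h1 h2 v hv)
    exact flagU_carrier_stab h0 hd ha (le_trans (Nat.sub_le i 1) h2) (hb i h1 h2 v hv)
  inv_mem' := by
    intro a ha i h1 h2 v hv
    rw [Set.mem_setOf_eq] at ha
    have hmul : ((a⁻¹ : GL (Fin n) K) : Matrix (Fin n) (Fin n) K)
        * ((a : Matrix (Fin n) (Fin n) K) - 1)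
        = 1 - ((a⁻¹ : GL (Fin n) K) : Matrix (Fin n) (Fin n) K) := by
      rw [mul_sub, Units.inv_mul, mul_one]
    have key : (((a⁻¹ : GL (Fin n) K) : Matrix (Fin n) (Fin n) K) - 1).mulVec v
        = -((a⁻¹ : GL (Fin n) K) : Matrix (Fin n) (Fin n) K).mulVec
            (((a : Matrix (Fin n) (Fin n) K) - 1).mulVec v) := by
      rw [Matrix.mulVec_mulVec, hmul, Matrix.sub_mulVec, Matrix.sub_mulVec,
        Matrix.one_mulVec, neg_sub]
    rw [key]
    exact Submodule.neg_mem _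
      (flagU_carrier_inv_stab h0 hd ha (le_trans (Nat.sub_le i 1) h2) (ha i h1 h2 v hv))

end flagU

section matCent

variable {K : Type*} [Field K] {n : ℕ}

private lemma matCent_key (x : Matrix (Fin n) (Fin n) K) (g : GL (Fin n) K) :
    (↑g : Matrix (Fin n) (Fin n) K) * x * (↑g⁻¹ : Matrix (Fin n) (Fin n) K) = x
      ↔ (↑g : Matrix (Fin n) (Fin n) K) * x = x * (↑g : Matrix (Fin n) (Fin n) K) := by
  constructor
  · intro h
    have h2 : (↑g : Matrix (Fin n) (Fin n) K) * x * (↑g⁻¹ : Matrix (Fin n) (Fin n) K)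
        * (↑g : Matrix (Fin n) (Fin n) K) = x * (↑g : Matrix (Fin n) (Fin n) K) := by rw [h]
    rwa [mul_assoc ((↑g : Matrix (Fin n) (Fin n) K) * x), Units.inv_mul, mul_one] at h2
  · intro h
    rw [h, mul_assoc, Units.mul_inv, mul_one]

/-- The centralizer in `GL n K` of a matrix `x`: all `g` with `g * x * g⁻¹ = x`. -/
def matCent (K : Type*) [Field K] (n : ℕ) (x : Matrix (Fin n) (Fin n) K) :
    Subgroup (GL (Fin n) K) where
  carrier := {g | (↑g : Matrix (Fin n) (Fin n) K) * x * (↑g⁻¹ : Matrix (Fin n) (Fin n) K) = x}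
  one_mem' := by
    simp
  mul_mem' := by
    intro a b ha hb
    simp only [Set.mem_setOf_eq, matCent_key] at ha hb ⊢
    have hab : ((↑(a * b) : Matrix (Fin n) (Fin n) K))
        = (↑a : Matrix (Fin n) (Fin n) K) * (↑b : Matrix (Fin n) (Fin n) K) := rfl
    rw [hab, mul_assoc, hb, ← mul_assoc, ha, mul_assoc]
  inv_mem' := by
    intro a ha
    simp only [Set.mem_setOf_eq, matCent_key] at ha ⊢
    calc (↑a⁻¹ : Matrix (Fin n) (Fin n) K) * x
        = ↑a⁻¹ * x * ((↑a : Matrix (Fin n) (Fin n) K) * ↑a⁻¹) := by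
          rw [Units.mul_inv, mul_one]
      _ = ↑a⁻¹ * (x * (↑a : Matrix (Fin n) (Fin n) K)) * ↑a⁻¹ := by
          simp only [mul_assoc]
      _ = ↑a⁻¹ * ((↑a : Matrix (Fin n) (Fin n) K) * x) * ↑a⁻¹ := by rw [← ha]
      _ = x * ↑a⁻¹ := by rw [← mul_assoc, Units.inv_mul, one_mul]

end matCent

/-- The Lie algebra of the unipotent radical: matrices mapping each flag subspace `V i`
into `V (i-1)`. -/
def uSet (K : Type*) [Field K] (n t : ℕ) (d : ℕ → ℕ) : Set (Matrix (Fin n) (Fin n) K) :=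
  {x | ∀ i, 1 ≤ i → i ≤ t → ∀ v ∈ coordSub K n (d i), x.mulVec v ∈ coordSub K n (d (i - 1))}

/-- A group is split unipotent over the field `K` if it has a finite normal series each of
whose successive quotients is isomorphic to the additive group `(K, +)`. -/
def IsSplitUnipotentOver (K : Type*) [Field K] (G : Type*) [Group G] : Prop :=
  ∃ (k : ℕ) (s : Fin (k + 1) → Subgroup G), s 0 = ⊥ ∧ s (Fin.last k) = ⊤ ∧
    ∀ i : Fin k, s i.castSucc ≤ s i.succ ∧
      ∃ _ : ((s i.castSucc).subgroupOf (s i.succ)).Normal,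
        Nonempty ((↥(s i.succ) ⧸ (s i.castSucc).subgroupOf (s i.succ)) ≃* Multiplicative K)

universe u

/-! The congruence subgroups `U_k = {g | (g - 1) F_i ⊆ F_{i-k}}` filter `C_U(x) = U_1 ∩ C(x)`
down to `U_t ∩ C(x) = 1`. For `k ≥ 1`, `g ↦ g - 1` induces a surjective homomorphism from
`U_k ∩ C(x)` onto the `K`-vector space `(𝔲_k ∩ 𝔠(x)) / (𝔲_{k+1} ∩ 𝔠(x))` with kernel
`U_{k+1} ∩ C(x)`. It is multiplicative because `gh - 1 = (g - 1)(h - 1) + (g - 1) + (h - 1)` with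
`(g - 1)(h - 1) ∈ 𝔲_{2k}`, and it is onto because every `z ∈ 𝔲_k` is nilpotent, so that `1 + z`
is invertible (and commutes with `x` when `z` does). A finite-dimensional quotient contributes one
step `(K, +)` per coordinate. -/

theorem mul_sub_one_eq {R : Type*} [Ring R] (a b : R) :
    a * b - 1 = (a - 1) * (b - 1) + (a - 1) + (b - 1) := by
  noncomm_ring

section SplitUnipotent

variable {K : Type*} [Field K] {G H : Type*} [Group G] [Group H]

variable (K) in
def IsSplitStep (A B : Subgroup G) : Prop :=
  A ≤ B ∧ ∃ _ : (A.subgroupOf B).Normal, Nonempty ((↥B ⧸ A.subgroupOf B) ≃* Multiplicative K)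

theorem isSplitUnipotentOver_iff :
    IsSplitUnipotentOver K G ↔ ∃ (k : ℕ) (s : Fin (k + 1) → Subgroup G), s 0 = ⊥ ∧
      s (Fin.last k) = ⊤ ∧ ∀ i : Fin k, IsSplitStep K (s i.castSucc) (s i.succ) :=
  Iff.rfl

theorem isSplitStep_of_surjective {A B : Subgroup G} (hAB : A ≤ B) (ψ : ↥B →* Multiplicative K)
    (hψ : Function.Surjective ψ) (hker : ψ.ker = A.subgroupOf B) : IsSplitStep K A B := by
  have : (A.subgroupOf B).Normal := hker ▸ ψ.normal_ker
  exact ⟨hAB, this, ⟨(QuotientGroup.quotientMulEquivOfEq hker.symm).trans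
      (QuotientGroup.quotientKerEquivOfSurjective ψ hψ)⟩⟩

theorem IsSplitStep.map {A B : Subgroup G} (h : IsSplitStep K A B) (f : G →* H)
    (hf : Function.Injective f) : IsSplitStep K (A.map f) (B.map f) := by
  obtain ⟨hAB, hN, ⟨q⟩⟩ := h
  let e := Subgroup.equivMapOfInjective B f hf
  have he : (A.subgroupOf B).map (e : ↥B →* ↥(B.map f)) = (A.map f).subgroupOf (B.map f) := by
    ext ⟨_, b, (hb : b ∈ B), rfl⟩
    simp [Subgroup.mem_subgroupOf, Subtype.ext_iff, e, hf.eq_iff, hb]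
  have : ((A.map f).subgroupOf (B.map f)).Normal := he ▸ hN.map _ e.surjective
  exact ⟨Subgroup.map_mono hAB, this, ⟨(QuotientGroup.congr _ _ e he).symm.trans q⟩⟩

theorem IsSplitUnipotentOver.of_subsingleton [Subsingleton G] : IsSplitUnipotentOver K G :=
  ⟨0, fun _ => ⊥, rfl, Subsingleton.elim _ _, Fin.elim0⟩

theorem IsSplitUnipotentOver.of_mulEquiv (e : G ≃* H) (h : IsSplitUnipotentOver K G) :
    IsSplitUnipotentOver K H := by
  obtain ⟨k, s, h0, hk, hs⟩ := isSplitUnipotentOver_iff.mp h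
  refine isSplitUnipotentOver_iff.mpr
    ⟨k, fun i => (s i).map (e : G →* H), ?_, ?_, fun i => (hs i).map _ e.injective⟩
  · simp [h0]
  · simp [hk, Subgroup.map_top_of_surjective (e : G →* H) e.surjective]

theorem IsSplitUnipotentOver.of_surjective_of_ker (ψ : G →* Multiplicative K)
    (hψ : Function.Surjective ψ) (h : IsSplitUnipotentOver K ψ.ker) :
    IsSplitUnipotentOver K G := by
  obtain ⟨k, s, h0, hk, hs⟩ := isSplitUnipotentOver_iff.mp h
  refine isSplitUnipotentOver_iff.mpr
    ⟨k + 1, Fin.snoc (fun i => (s i).map ψ.ker.subtype) ⊤, ?_, by simp, fun i => ?_⟩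
  · simp [h0]
  · induction i using Fin.lastCases with
    | last =>
      simp only [Fin.succ_last, Fin.snoc_last, Fin.snoc_castSucc, hk, ← MonoidHom.range_eq_map,
        Subgroup.range_subtype]
      exact isSplitStep_of_surjective le_top (ψ.domRestrict ⊤)
        (fun c => let ⟨g, hg⟩ := hψ c; ⟨⟨g, trivial⟩, hg⟩) rfl
    | cast j =>
      simp only [Fin.succ_castSucc, Fin.snoc_castSucc]
      exact (hs j).map _ ψ.ker.subtype_injective

theorem IsSplitUnipotentOver.of_surjective_of_ker_module {V : Type*} [AddCommGroup V]
    [Module K V] [FiniteDimensional K V] (φ : G →* Multiplicative V)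
    (hφ : Function.Surjective φ) (h : IsSplitUnipotentOver K φ.ker) :
    IsSplitUnipotentOver K G := by
  induction hm : Module.finrank K V generalizing V G with
  | zero =>
    have : Subsingleton V := Module.finrank_zero_iff.mp hm
    have hker : φ.ker = ⊤ := eq_top_iff.mpr fun g _ => Subsingleton.elim _ _
    exact (hker ▸ h).of_mulEquiv Subgroup.topEquiv
  | succ m ih =>
    let b := Module.finBasisOfFinrankEq K V hm
    let π : V →ₗ[K] K := b.coord (Fin.last m)
    have hπ : Function.Surjective π := fun c => ⟨c • b (Fin.last m), by simp [π]⟩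
    let ψ : G →* Multiplicative K := π.toAddMonoidHom.toMultiplicative.comp φ
    have hψ : Function.Surjective ψ := (hπ.comp hφ :)
    let φ' : ψ.ker →* Multiplicative (LinearMap.ker π) :=
      MonoidHom.mk' (fun g => .ofAdd ⟨(φ g).toAdd, g.2⟩) fun g h => by
        simp only [Subgroup.coe_mul, map_mul, toAdd_mul]; rfl
    have hφ' : Function.Surjective φ' := fun w =>
      let ⟨g, hg⟩ := hφ (.ofAdd w.toAdd)
      ⟨⟨g, by simp [ψ, hg]⟩, by simp [φ', hg]⟩
    have hker : φ'.ker = φ.ker.subgroupOf ψ.ker := by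
      ext g
      simp [φ', Subtype.ext_iff, Subgroup.mem_subgroupOf]
    have hrank : Module.finrank K (LinearMap.ker π) = m := by
      have := LinearMap.finrank_range_add_finrank_ker π
      rw [LinearMap.range_eq_top.mpr hπ, finrank_top, Module.finrank_self, hm] at this
      omega
    refine IsSplitUnipotentOver.of_surjective_of_ker ψ hψ (ih φ' hφ' ?_ hrank)
    rw [hker]
    exact h.of_mulEquiv (Subgroup.subgroupOfEquivOfLe fun g hg => by simp_all [ψ]).symm

end SplitUnipotent

section Flag

variable {K : Type*} [Field K] {n : ℕ} (F : ℕ → Submodule K (Fin n → K)) (t : ℕ)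

/-- For the flag `F`, this is the space `𝔲_k` of matrices lowering it by `k` steps; `𝔲_1 = 𝔲`. -/
def flagShift (k : ℕ) : Submodule K (Matrix (Fin n) (Fin n) K) where
  carrier := {y | ∀ i ≤ t, ∀ v ∈ F i, y *ᵥ v ∈ F (i - k)}
  add_mem' ha hb i hi v hv := by
    rw [add_mulVec]
    exact add_mem (ha i hi v hv) (hb i hi v hv)
  zero_mem' i _ v _ := by
    rw [zero_mulVec]
    exact zero_mem _
  smul_mem' c y hy i hi v hv := by
    rw [smul_mulVec]
    exact Submodule.smul_mem _ c (hy i hi v hv)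

variable {F t}

theorem one_mem_flagShift_zero : (1 : Matrix (Fin n) (Fin n) K) ∈ flagShift F t 0 :=
  fun i _ v hv => by simpa using hv

theorem mul_mem_flagShift {k l : ℕ} {y z : Matrix (Fin n) (Fin n) K} (hy : y ∈ flagShift F t k)
    (hz : z ∈ flagShift F t l) : y * z ∈ flagShift F t (k + l) := fun i hi v hv => by
  rw [← mulVec_mulVec, add_comm, ← Nat.sub_sub]
  exact hy _ (i.sub_le l |>.trans hi) _ (hz i hi v hv)

theorem pow_mem_flagShift {k : ℕ} {y : Matrix (Fin n) (Fin n) K} (hy : y ∈ flagShift F t k)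
    (m : ℕ) : y ^ m ∈ flagShift F t (m * k) := by
  induction m with
  | zero => simpa using one_mem_flagShift_zero
  | succ m ih => simpa [pow_succ, add_mul] using mul_mem_flagShift ih hy

theorem flagShift_antitone (hF : Monotone F) : Antitone (flagShift F t) :=
  fun _ _ hkl _ hy i hi v hv => hF (Nat.sub_le_sub_left hkl i) (hy i hi v hv)

theorem eq_zero_of_mem_flagShift (hF0 : F 0 = ⊥) (hFt : F t = ⊤) {k : ℕ} (hk : t ≤ k)
    {y : Matrix (Fin n) (Fin n) K} (hy : y ∈ flagShift F t k) : y = 0 := by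
  have hyv (v : Fin n → K) : y *ᵥ v = 0 := by
    have := hy t le_rfl v (hFt ▸ Submodule.mem_top)
    rwa [Nat.sub_eq_zero_of_le hk, hF0, Submodule.mem_bot] at this
  exact toLin'.injective (LinearMap.ext fun v => by simpa using hyv v)

theorem isNilpotent_of_mem_flagShift (hF0 : F 0 = ⊥) (hFt : F t = ⊤) {k : ℕ} (hk : 1 ≤ k)
    {y : Matrix (Fin n) (Fin n) K} (hy : y ∈ flagShift F t k) : IsNilpotent y :=
  ⟨t, eq_zero_of_mem_flagShift hF0 hFt (Nat.le_mul_of_pos_right t hk) (pow_mem_flagShift hy t)⟩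

theorem inv_mulVec_mem {W : Submodule K (Fin n → K)} {g : GL (Fin n) K}
    (hg : ∀ v ∈ W, (g : Matrix (Fin n) (Fin n) K) *ᵥ v ∈ W) {v : Fin n → K} (hv : v ∈ W) :
    (↑g⁻¹ : Matrix (Fin n) (Fin n) K) *ᵥ v ∈ W := by
  let f : W →ₗ[K] W := (toLin' (g : Matrix (Fin n) (Fin n) K)).restrict hg
  have hf : Function.Injective f := fun a b hab => Subtype.ext <| by
    have hgab : (g : Matrix (Fin n) (Fin n) K) *ᵥ a = (g : Matrix (Fin n) (Fin n) K) *ᵥ b :=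
      congrArg Subtype.val hab
    simpa only [mulVec_mulVec, Units.inv_mul, one_mulVec] using
      congrArg ((↑g⁻¹ : Matrix (Fin n) (Fin n) K) *ᵥ ·) hgab
  -- `f` is injective on the finite-dimensional `W`, hence onto it.
  obtain ⟨w, hw⟩ := LinearMap.injective_iff_surjective.mp hf ⟨v, hv⟩
  have hwv : (g : Matrix (Fin n) (Fin n) K) *ᵥ w = v := congrArg Subtype.val hw
  simp [← hwv, mulVec_mulVec]

theorem inv_mem_flagShift_zero {g : GL (Fin n) K}
    (hg : (g : Matrix (Fin n) (Fin n) K) ∈ flagShift F t 0) :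
    (↑g⁻¹ : Matrix (Fin n) (Fin n) K) ∈ flagShift F t 0 := fun i hi _ hv =>
  inv_mulVec_mem (fun v hv => by simpa using hg i hi v hv) hv

variable (F t) in
def congrSubgroup (hF : Monotone F) (k : ℕ) : Subgroup (GL (Fin n) K) where
  carrier := {g | (g : Matrix (Fin n) (Fin n) K) - 1 ∈ flagShift F t k}
  one_mem' := by simp
  mul_mem' {a b} ha hb := by
    rw [Set.mem_ofPred_eq, Units.val_mul, mul_sub_one_eq]
    exact add_mem (add_mem (flagShift_antitone hF (Nat.le_add_right k k)
      (mul_mem_flagShift ha hb)) ha) hb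
  inv_mem' {a} ha := by
    have ha₀ : (a : Matrix (Fin n) (Fin n) K) ∈ flagShift F t 0 := by
      simpa using add_mem (flagShift_antitone hF (Nat.zero_le k) ha) one_mem_flagShift_zero
    have hinv : (↑a⁻¹ : Matrix (Fin n) (Fin n) K) - 1 =
        -((↑a⁻¹ : Matrix (Fin n) (Fin n) K) * ((a : Matrix (Fin n) (Fin n) K) - 1)) := by
      rw [mul_sub, Units.inv_mul, mul_one, neg_sub]
    rw [Set.mem_ofPred_eq, hinv]
    simpa using neg_mem (mul_mem_flagShift (inv_mem_flagShift_zero ha₀) ha)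

theorem mem_congrSubgroup {hF : Monotone F} {k : ℕ} {g : GL (Fin n) K} :
    g ∈ congrSubgroup F t hF k ↔ (g : Matrix (Fin n) (Fin n) K) - 1 ∈ flagShift F t k :=
  Iff.rfl

theorem congrSubgroup_antitone (hF : Monotone F) : Antitone (congrSubgroup F t hF) :=
  fun _ _ hkl _ hg => flagShift_antitone hF hkl hg

theorem congrSubgroup_eq_bot (hF : Monotone F) (hF0 : F 0 = ⊥) (hFt : F t = ⊤) {k : ℕ}
    (hk : t ≤ k) : congrSubgroup F t hF k = ⊥ :=
  eq_bot_iff.mpr fun _ hg => Units.ext (sub_eq_zero.mp (eq_zero_of_mem_flagShift hF0 hFt hk hg))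

theorem mem_matCent_iff {x : Matrix (Fin n) (Fin n) K} {g : GL (Fin n) K} :
    g ∈ matCent K n x ↔ (g : Matrix (Fin n) (Fin n) K) * x = x * g :=
  matCent_key x g

variable (F t) in
def centralizerShift (x : Matrix (Fin n) (Fin n) K) (k : ℕ) :
    Submodule K (Matrix (Fin n) (Fin n) K) :=
  flagShift F t k ⊓ (Subalgebra.centralizer K {x}).toSubmodule

theorem sub_one_mem_centralizerShift {hF : Monotone F} {x : Matrix (Fin n) (Fin n) K} {k : ℕ}
    {g : GL (Fin n) K} (hg : g ∈ congrSubgroup F t hF k ⊓ matCent K n x) :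
    (g : Matrix (Fin n) (Fin n) K) - 1 ∈ centralizerShift F t x k := by
  refine ⟨hg.1, (Subalgebra.mem_centralizer_iff K).mpr ?_⟩
  rintro _ rfl
  rw [mul_sub, sub_mul, mem_matCent_iff.mp hg.2, mul_one, one_mul]

variable (t) in
noncomputable def gradedHom (hF : Monotone F) (x : Matrix (Fin n) (Fin n) K) {k : ℕ}
    (hk : 1 ≤ k) : ↥(congrSubgroup F t hF k ⊓ matCent K n x) →*
      Multiplicative (centralizerShift F t x k ⧸
        (flagShift F t (k + 1)).comap (centralizerShift F t x k).subtype) :=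
  MonoidHom.mk' (fun g => .ofAdd (Submodule.Quotient.mk ⟨_, sub_one_mem_centralizerShift g.2⟩))
    fun g h => by
      rw [← ofAdd_add, ← Submodule.Quotient.mk_add]
      refine congrArg Multiplicative.ofAdd ((Submodule.Quotient.eq _).mpr ?_)
      simpa [mul_sub_one_eq, add_assoc] using
        flagShift_antitone hF (show k + 1 ≤ k + k by omega) (mul_mem_flagShift g.2.1 h.2.1)

theorem gradedHom_surjective (hF : Monotone F) (hF0 : F 0 = ⊥) (hFt : F t = ⊤)
    (x : Matrix (Fin n) (Fin n) K) {k : ℕ} (hk : 1 ≤ k) :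
    Function.Surjective (gradedHom t hF x hk) := by
  intro q
  obtain ⟨⟨z, hzk, hzx⟩, hz⟩ := Submodule.Quotient.mk_surjective _ q.toAdd
  have hu := (isNilpotent_of_mem_flagShift hF0 hFt hk hzk).isUnit_one_add
  have hzx : x * z = z * x := hzx x rfl
  refine ⟨⟨hu.unit, ?_, ?_⟩, ?_⟩
  · simpa [mem_congrSubgroup] using hzk
  · simp [mem_matCent_iff, add_mul, mul_add, hzx]
  · simp [gradedHom, hz]

theorem ker_gradedHom (hF : Monotone F) (x : Matrix (Fin n) (Fin n) K) {k : ℕ} (hk : 1 ≤ k) :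
    (gradedHom t hF x hk).ker =
      (congrSubgroup F t hF (k + 1) ⊓ matCent K n x).subgroupOf
        (congrSubgroup F t hF k ⊓ matCent K n x) := by
  ext g
  simp only [MonoidHom.mem_ker, Subgroup.mem_subgroupOf, Subgroup.mem_inf, mem_congrSubgroup,
    gradedHom, MonoidHom.mk'_apply, ofAdd_eq_one, Submodule.Quotient.mk_eq_zero,
    Submodule.mem_comap, Submodule.subtype_apply]
  exact ⟨fun h => ⟨h, g.2.2⟩, And.left⟩

theorem isSplitUnipotentOver_congrSubgroup_inf_matCent (hF : Monotone F) (hF0 : F 0 = ⊥)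
    (hFt : F t = ⊤) (x : Matrix (Fin n) (Fin n) K) {k : ℕ} (hk : 1 ≤ k) :
    IsSplitUnipotentOver K ↥(congrSubgroup F t hF k ⊓ matCent K n x) := by
  induction hm : t - k generalizing k with
  | zero =>
    rw [congrSubgroup_eq_bot hF hF0 hFt (by omega), bot_inf_eq]
    exact .of_subsingleton
  | succ m ih =>
    refine .of_surjective_of_ker_module (gradedHom t hF x hk)
      (gradedHom_surjective hF hF0 hFt x hk) ?_
    rw [ker_gradedHom]
    exact (ih (by omega) (by omega)).of_mulEquiv (Subgroup.subgroupOfEquivOfLe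
      (inf_le_inf_right _ (congrSubgroup_antitone hF k.le_succ))).symm

end Flag

theorem flagU_eq_congrSubgroup {K : Type*} [Field K] {n t : ℕ} {d : ℕ → ℕ} (h0 : d 0 = 0)
    (hd : Monotone d) :
    flagU K n t d h0 hd = congrSubgroup (fun i => coordSub K n (d i)) t
      (fun _ _ hij => coordSub_mono K n (hd hij)) 1 := by
  ext g
  refine ⟨fun hg i hi v hv => ?_, fun hg i _ hi => hg i hi⟩
  rcases i.eq_zero_or_pos with rfl | hi0
  · simp [coordSub_zero K n (by simpa [h0] using hv)]
  · exact hg i hi0 hi v hv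

theorem stmt5_general (n t : ℕ)
    (d : ℕ → ℕ) (hd : Monotone d) (h0 : d 0 = 0) (hdt : d t = n)
    (K : Type u) [Field K] (x : Matrix (Fin n) (Fin n) K) :
    IsSplitUnipotentOver K ↥(flagU K n t d h0 hd ⊓ matCent K n x) := by
  rw [flagU_eq_congrSubgroup]
  refine isSplitUnipotentOver_congrSubgroup_inf_matCent _ ?_ ?_ x le_rfl
  · exact eq_bot_iff.mpr fun v hv => coordSub_zero K n (by simpa [h0] using hv)
  · exact eq_top_iff.mpr fun v _ j hj => absurd j.isLt (by omega)

/-- The centralizer `C_U(x)` is a split unipotent group over `K`. -/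
theorem stmt5 (n t : ℕ) (hn : 1 ≤ n) (ht1 : 1 ≤ t) (ht : t ≤ 5)
    (d : ℕ → ℕ) (hd : Monotone d) (h0 : d 0 = 0) (hdt : d t = n)
    (K : Type u) [Field K] (x : Matrix (Fin n) (Fin n) K) (hx : x ∈ uSet K n t d) :
    IsSplitUnipotentOver K ↥(flagU K n t d h0 hd ⊓ matCent K n x) :=
  stmt5_general n t d hd h0 hdt K x
end

section
/- Suppose t ≤ 5. Let q be a prime power and let x ∈ u_{F_q}(d). Then there exists δ' ∈ ℕ such that the cardinality of the centralizer C_{U_{F_q}(d)}(x) equals q^{δ'}. -/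
open Matrix

universe u

section proofAux

variable {K : Type u} [Field K] {n t : ℕ} {d : ℕ → ℕ}

private lemma uSet_pow_zero (h0 : d 0 = 0) (ht1 : 1 ≤ t) (hdt : d t = n)
    {y : Matrix (Fin n) (Fin n) K} (hy : y ∈ uSet K n t d) : y ^ t = 0 := by
  have key : ∀ j, j ≤ t → ∀ v : Fin n → K,
      (y ^ j).mulVec v ∈ coordSub K n (d (t - j)) := by
    intro j
    induction j with
    | zero =>
      intro _ v
      rw [pow_zero, Matrix.one_mulVec]
      intro i hi
      rw [Nat.sub_zero, hdt] at hi
      exact absurd i.isLt (not_lt.2 hi)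
    | succ j ih =>
      intro hj v
      have h1 : 1 ≤ t - j := by omega
      have h2 : t - j ≤ t := Nat.sub_le _ _
      have hmem := hy (t - j) h1 h2 _ (ih (by omega) v)
      have hpow : (y ^ (j + 1)).mulVec v = y.mulVec ((y ^ j).mulVec v) := by
        rw [pow_succ', Matrix.mulVec_mulVec]
      rw [hpow]
      have heq : t - j - 1 = t - (j + 1) := by omega
      rwa [heq] at hmem
  have hz : ∀ v : Fin n → K, (y ^ t).mulVec v = 0 := by
    intro v
    have := key t le_rfl v
    rw [Nat.sub_self, h0] at this
    exact coordSub_zero K n this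
  ext i j
  have := congrFun (hz (Pi.single j 1)) i
  simpa using this

/-- The intersection of `u(d)` with the centralizer algebra of `x`, as a `K`-subspace. -/
private def centSub (n t : ℕ) (d : ℕ → ℕ) (x : Matrix (Fin n) (Fin n) K) :
    Submodule K (Matrix (Fin n) (Fin n) K) where
  carrier := {y | y ∈ uSet K n t d ∧ y * x = x * y}
  zero_mem' := by
    refine ⟨fun i h1 h2 v hv => ?_, by simp⟩
    rw [Matrix.zero_mulVec]
    exact Submodule.zero_mem _
  add_mem' := by
    rintro a b ⟨ha1, ha2⟩ ⟨hb1, hb2⟩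
    refine ⟨fun i h1 h2 v hv => ?_, by rw [add_mul, mul_add, ha2, hb2]⟩
    rw [Matrix.add_mulVec]
    exact Submodule.add_mem _ (ha1 i h1 h2 v hv) (hb1 i h1 h2 v hv)
  smul_mem' := by
    rintro c y ⟨hy1, hy2⟩
    refine ⟨fun i h1 h2 v hv => ?_, by rw [smul_mul_assoc, hy2, mul_smul_comm]⟩
    rw [Matrix.smul_mulVec]
    exact Submodule.smul_mem _ _ (hy1 i h1 h2 v hv)

private lemma centSub_bij (h0 : d 0 = 0) (hd : Monotone d) (ht1 : 1 ≤ t) (hdt : d t = n)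
    (x : Matrix (Fin n) (Fin n) K) :
    ∃ f : centSub n t d x → ↥(flagU K n t d h0 hd ⊓ matCent K n x),
      Function.Bijective f := by
  have hunit : ∀ y : centSub n t d x, IsUnit ((1 : Matrix (Fin n) (Fin n) K) + (y : Matrix (Fin n) (Fin n) K)) := by
    intro ⟨y, hy⟩
    exact IsNilpotent.isUnit_one_add ⟨t, uSet_pow_zero h0 ht1 hdt hy.1⟩
  refine ⟨fun y => ⟨(hunit y).unit, ?_⟩, ?_, ?_⟩
  · rw [Subgroup.mem_inf]
    constructor
    · intro i h1 h2 v hv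
      have : ((((hunit y).unit : GL (Fin n) K) : Matrix (Fin n) (Fin n) K) - 1)
          = (y : Matrix (Fin n) (Fin n) K) := by
        rw [(hunit y).unit_spec, add_sub_cancel_left]
      rw [this]
      exact y.2.1 i h1 h2 v hv
    · show _ * x * _ = x
      rw [matCent_key x]
      rw [(hunit y).unit_spec, add_mul, mul_add, one_mul, mul_one, y.2.2]
  · intro y1 y2 h
    have : (((hunit y1).unit : GL (Fin n) K) : Matrix (Fin n) (Fin n) K)
        = (((hunit y2).unit : GL (Fin n) K) : Matrix (Fin n) (Fin n) K) := by
      rw [Subtype.ext_iff] at h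
      exact congrArg Units.val h
    rw [(hunit y1).unit_spec, (hunit y2).unit_spec] at this
    exact Subtype.ext (by linear_combination (norm := abel) this)
  · rintro ⟨g, hg⟩
    rw [Subgroup.mem_inf] at hg
    obtain ⟨hg1, hg2⟩ := hg
    have hcomm : (g : Matrix (Fin n) (Fin n) K) * x = x * (g : Matrix (Fin n) (Fin n) K) :=
      (matCent_key x g).1 hg2
    refine ⟨⟨(g : Matrix (Fin n) (Fin n) K) - 1, ⟨fun i h1 h2 v hv => hg1 i h1 h2 v hv, ?_⟩⟩, ?_⟩
    · rw [sub_mul, mul_sub, one_mul, mul_one, hcomm]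
    · apply Subtype.ext
      apply Units.ext
      show ((IsUnit.unit _ : GL (Fin n) K) : Matrix (Fin n) (Fin n) K) = _
      rw [IsUnit.unit_spec, add_sub_cancel]

end proofAux


/-- The order of the centralizer `C_U(x)` over `F_q` is a power of `q`. -/
theorem stmt7 (n t : ℕ) (hn : 1 ≤ n) (ht1 : 1 ≤ t) (ht : t ≤ 5)
    (d : ℕ → ℕ) (hd : Monotone d) (h0 : d 0 = 0) (hdt : d t = n)
    (p k : ℕ) (hp : p.Prime) (hk : 1 ≤ k)
    (K : Type u) [Field K] [Fintype K] (hcard : Fintype.card K = p ^ k)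
    (x : Matrix (Fin n) (Fin n) K) (hx : x ∈ uSet K n t d) :
    ∃ δ' : ℕ, Nat.card ↥(flagU K n t d h0 hd ⊓ matCent K n x) = (p ^ k) ^ δ' := by
  obtain ⟨f, hf⟩ := centSub_bij h0 hd ht1 hdt x
  refine ⟨Module.finrank K (centSub n t d x), ?_⟩
  haveI : Fintype ↥(centSub n t d x) := Fintype.ofFinite _
  rw [← Nat.card_congr (Equiv.ofBijective f hf), Nat.card_eq_fintype_card,
    Module.card_eq_pow_finrank (K := K), hcard]
end

section
/- Let P be a finite group acting on a finite set X, let U be a normal subgroup of P, and let R be a complete and irredundant set of representatives of the P-orbits on X. Then the number of U-orbits on X equals (|P| / |U|) · Σ_{x ∈ R} |Stab_U(x)| / |Stab_P(x)|, where Stab_U(x) and Stab_P(x) denote the stabilizers of x in U and in P. -/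
open MulAction Pointwise

section Aux

variable {P : Type*} [Group P] {X : Type*} [MulAction P X]

lemma aux_orbit_smul_normal (U : Subgroup P) (hU : U.Normal) (g : P) (y : X) :
    orbit U (g • y) = g • orbit U y := by
  ext z
  constructor
  · rintro ⟨u, rfl⟩
    refine ⟨(⟨g⁻¹ * ↑u * g, hU.conj_mem' ↑u u.2 g⟩ : U) • y, mem_orbit _ _, ?_⟩
    simp [Subgroup.smul_def, mul_smul]
  · rintro ⟨w, ⟨u, rfl⟩, rfl⟩
    refine ⟨⟨g * ↑u * g⁻¹, hU.conj_mem ↑u u.2 g⟩, ?_⟩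
    simp [Subgroup.smul_def, mul_smul]

/-- orbit-stabilizer with Nat.card -/
lemma aux_os [Finite P] (x : X) :
    Nat.card (orbit P x) * Nat.card (stabilizer P x) = Nat.card P := by
  rw [← Nat.card_prod]
  exact Nat.card_congr (orbitProdStabilizerEquivGroup P x)

/-- per-orbit count -/
lemma aux_perorbit [Finite X] (U : Subgroup P) (hU : U.Normal) (x : X) :
    Nat.card {O : Set X | ∃ y ∈ orbit P x, O = orbit U y} * Nat.card (orbit U x)
      = Nat.card (orbit P x) := by
  classical
  set T : Set (Set X) := {O : Set X | ∃ y ∈ orbit P x, O = orbit U y} with hT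
  have hsub : ∀ y ∈ orbit P x, orbit U y ⊆ orbit P x := by
    rintro y hy z ⟨u, rfl⟩
    have hyx : orbit P y = orbit P x := orbit_eq_iff.2 hy
    rw [← hyx]
    exact mem_orbit _ _
  let F : orbit P x → Σ O : T, ↥(O : Set X) :=
    fun y => ⟨⟨orbit U ↑y, ⟨↑y, y.2, rfl⟩⟩, ⟨↑y, mem_orbit_self _⟩⟩
  have hFinj : Function.Injective F := by
    intro y1 y2 h
    exact Subtype.ext (congrArg (fun p : Σ O : T, ↥(O : Set X) => (p.2 : X)) h)
  have hFsurj : Function.Surjective F := by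
    rintro ⟨⟨O, y0, hy0, rfl⟩, z, hz⟩
    have hz' : z ∈ orbit U y0 := hz
    have key : orbit U z = orbit U y0 := orbit_eq_iff.2 hz'
    refine ⟨⟨z, hsub y0 hy0 hz'⟩, ?_⟩
    refine Sigma.ext (Subtype.ext ?_) ((Subtype.heq_iff_coe_eq ?_).2 rfl)
    · exact key
    · intro w
      show w ∈ orbit U z ↔ w ∈ orbit U y0
      rw [key]
  have hcard : Nat.card (orbit P x) = Nat.card (Σ O : T, ↥(O : Set X)) :=
    Nat.card_congr (Equiv.ofBijective F ⟨hFinj, hFsurj⟩)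
  have hOcard : ∀ O : T, Nat.card ↥(O : Set X) = Nat.card (orbit U x) := by
    rintro ⟨O, y0, ⟨g, rfl⟩, rfl⟩
    show Nat.card ↥(orbit U ((g : P) • x)) = _
    rw [aux_orbit_smul_normal U hU g x, Set.natCard_smul_set]
  haveI : Fintype ↥T := Fintype.ofFinite _
  haveI : ∀ O : T, Fintype ↥(O : Set X) := fun O => Fintype.ofFinite _
  have hsig : Nat.card (Σ O : T, ↥(O : Set X)) = ∑ O : T, Nat.card ↥(O : Set X) := by
    rw [Nat.card_eq_fintype_card, Fintype.card_sigma]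
    exact Finset.sum_congr rfl fun O _ => (Nat.card_eq_fintype_card).symm
  rw [hcard, hsig, Finset.sum_congr rfl (fun O _ => hOcard O), Finset.sum_const,
    Finset.card_univ, smul_eq_mul, Nat.card_eq_fintype_card]

end Aux

set_option maxHeartbeats 1000000 in
/-- Orbit-counting formula: if `U ⊴ P` are finite groups acting on a finite set `X` and `R`
is a complete irredundant set of representatives of the `P`-orbits, then the number of
`U`-orbits on `X` equals `(|P|/|U|) · Σ_{x ∈ R} |Stab_U(x)|/|Stab_P(x)|`. -/
theorem stmt10 (P : Type*) [Group P] [Finite P] (X : Type*) [Finite X] [MulAction P X]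
    (U : Subgroup P) (hU : U.Normal) (R : Finset X)
    (hcomplete : ∀ y : X, ∃ x ∈ R, y ∈ MulAction.orbit P x)
    (hirr : ∀ x ∈ R, ∀ x' ∈ R, x' ∈ MulAction.orbit P x → x = x') :
    (Nat.card ↥{O : Set X | ∃ y : X, O = MulAction.orbit U y} : ℚ)
      = ((Nat.card P : ℚ) / (Nat.card U : ℚ)) *
        ∑ x ∈ R, (Nat.card (MulAction.stabilizer U x) : ℚ)
          / (Nat.card (MulAction.stabilizer P x) : ℚ) := by
  classical
  set T : X → Set (Set X) := fun x => {O : Set X | ∃ y ∈ orbit P x, O = orbit U y} with hT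
  set S : Set (Set X) := {O : Set X | ∃ y : X, O = orbit U y} with hS
  -- global decomposition
  let B : (Σ x : ↥R, ↥(T x)) → ↥S := fun p =>
    ⟨(p.2 : Set X), by obtain ⟨y, _, h⟩ := p.2.2; exact ⟨y, h⟩⟩
  have hBinj : Function.Injective B := by
    rintro ⟨x1, O1⟩ ⟨x2, O2⟩ h
    have hval : (O1 : Set X) = (O2 : Set X) := congrArg Subtype.val h
    obtain ⟨y1, hy1, hO1⟩ := O1.2
    obtain ⟨y2, hy2, hO2⟩ := O2.2
    have hy12 : y1 ∈ orbit P (x2 : X) := by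
      have hmem : y1 ∈ orbit U y2 := by
        rw [← hO2, ← hval, hO1]; exact mem_orbit_self _
      obtain ⟨u, rfl⟩ := hmem
      have horb : orbit P y2 = orbit P (x2 : X) := orbit_eq_iff.2 hy2
      rw [← horb]; exact mem_orbit _ _
    have hx : (x1 : X) = (x2 : X) := by
      apply hirr _ x1.2 _ x2.2
      have h1 : orbit P y1 = orbit P (x1 : X) := orbit_eq_iff.2 hy1
      have h2 : orbit P y1 = orbit P (x2 : X) := orbit_eq_iff.2 hy12
      rw [← h1, h2]
      exact mem_orbit_self _
    have hx' : x1 = x2 := Subtype.ext hx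
    subst hx'
    exact congrArg _ (Subtype.ext hval)
  have hBsurj : Function.Surjective B := by
    rintro ⟨O, y, rfl⟩
    obtain ⟨x, hxR, hyx⟩ := hcomplete y
    exact ⟨⟨⟨x, hxR⟩, ⟨orbit U y, ⟨y, hyx, rfl⟩⟩⟩, rfl⟩
  haveI : Fintype ↥S := Fintype.ofFinite _
  haveI : ∀ x : ↥R, Fintype ↥(T x) := fun x => Fintype.ofFinite _
  have hcardS : Nat.card ↥S = ∑ x ∈ R, Nat.card ↥(T x) := by
    rw [← Nat.card_congr (Equiv.ofBijective B ⟨hBinj, hBsurj⟩),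
      Nat.card_eq_fintype_card, Fintype.card_sigma,
      ← Finset.sum_coe_sort R fun x => Nat.card ↥(T x)]
    exact Finset.sum_congr rfl fun x _ => (Nat.card_eq_fintype_card).symm
  rw [show (Nat.card ↥{O : Set X | ∃ y : X, O = MulAction.orbit U y}) = Nat.card ↥S from rfl,
    hcardS]
  push_cast
  rw [Finset.mul_sum]
  refine Finset.sum_congr rfl fun x _ => ?_
  -- per-orbit rational identity
  have hA := aux_perorbit U hU (X := X) x
  have hOSP := aux_os (P := P) x
  have hOSU := aux_os (P := U) x
  have h1 : (Nat.card ↥(T x) : ℚ) * Nat.card (orbit U x) = Nat.card (orbit P x) := by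
    exact_mod_cast hA
  have h2 : (Nat.card (orbit P x) : ℚ) * Nat.card (stabilizer P x) = Nat.card P := by
    exact_mod_cast hOSP
  have h3 : (Nat.card (orbit U x) : ℚ) * Nat.card (stabilizer U x) = Nat.card U := by
    exact_mod_cast hOSU
  have hOU : (Nat.card (orbit U x) : ℚ) ≠ 0 := by
    haveI : Nonempty (orbit U x) := ⟨⟨x, mem_orbit_self _⟩⟩
    exact_mod_cast Nat.card_pos.ne'
  have hSP : (Nat.card (stabilizer P x) : ℚ) ≠ 0 := by
    exact_mod_cast (Nat.card_pos (α := stabilizer P x)).ne'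
  have hSU : (Nat.card (stabilizer U x) : ℚ) ≠ 0 := by
    exact_mod_cast (Nat.card_pos (α := stabilizer U x)).ne'
  have hUc : (Nat.card U : ℚ) ≠ 0 := by
    exact_mod_cast (Nat.card_pos (α := U)).ne'
  rw [← h2, ← h3, div_mul_div_comm,
    eq_div_iff (mul_ne_zero (mul_ne_zero hOU hSU) hSP)]
  linear_combination (Nat.card (stabilizer U x) : ℚ) * (Nat.card (stabilizer P x) : ℚ) * h1
end

section
/- Let q be a prime power and let V ≤ GL_4(F_q) be the group of upper unitriangular 4 × 4 matrices u over F_q with u_{23} = 0 (this is the unipotent radical of the stabilizer in GL_4(F_q) of the flag 0 ⊆ F_q^1 ⊆ F_q^3 ⊆ F_q^4 of coordinate subspaces). Then the number of conjugacy classes of V equals (q−1)^4 + 4(q−1)^3 + 6(q−1)^2 + 5(q−1) + 1. -/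
open Matrix

/-- The dimension sequence `0, 2, 3, 4` of the flag `0 ⊆ F^2 ⊆ F^3 ⊆ F^4`. -/
def dU234 : ℕ → ℕ := fun i => min (min (i + 1) (2 * i)) 4

lemma dU234_zero : dU234 0 = 0 := rfl

lemma dU234_mono : Monotone dU234 := by
  intro a b h
  simp only [dU234]
  omega

/-- The dimension sequence `0, 1, 3, 4` of the flag `0 ⊆ F^1 ⊆ F^3 ⊆ F^4`. -/
def dV134 : ℕ → ℕ := fun i => min (2 * i - 1) 4

lemma dV134_zero : dV134 0 = 0 := rfl

lemma dV134_mono : Monotone dV134 := by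
  intro a b h
  simp only [dV134]
  omega

universe u

/-!
Writing `u = (g₁₂, g₁₃)`, `v = (g₂₄, g₃₄)` and `c = g₁₄`, the group `V` is the Heisenberg group
`K² × K² × K` with `(u, v, c) (u', v', c') = (u + u', v + v', c + c' + u ⬝ v')`.
Conjugating `(u, v, c)` by `(a, b, _)` replaces `c` by `c + a ⬝ v - u ⬝ b`, and the linear form
`(a, b) ↦ a ⬝ v - u ⬝ b` is onto `K` unless `(u, v) = 0`. So the class of a central element
`(0, 0, c)` is a singleton and every other class is determined by `(u, v) ≠ 0`, which gives
`q + (q⁴ - 1)` classes.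
-/

theorem MulEquiv.isConj_iff {G H : Type*} [Group G] [Group H] (e : G ≃* H) {x y : G} :
    IsConj (e x) (e y) ↔ IsConj x y :=
  ⟨fun h => by simpa using e.symm.toMonoidHom.map_isConj h, e.toMonoidHom.map_isConj⟩

theorem Nat.card_conjClasses_eq_of_isConj_iff {G α : Type*} [Group G] (f : G → α)
    (hf : ∀ x y, IsConj x y ↔ f x = f y) (hsurj : Function.Surjective f) :
    Nat.card (ConjClasses G) = Nat.card α :=
  Nat.card_congr ((Quotient.congr (Equiv.refl G) hf).trans
    (Setoid.quotientKerEquivOfSurjective f hsurj))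

theorem MulEquiv.card_conjClasses_eq {G H : Type*} [Group G] [Group H] (e : G ≃* H) :
    Nat.card (ConjClasses G) = Nat.card (ConjClasses H) :=
  Nat.card_conjClasses_eq_of_isConj_iff (ConjClasses.mk ∘ e)
    (fun _ _ => (ConjClasses.mk_eq_mk_iff_isConj.trans e.isConj_iff).symm)
    (ConjClasses.mk_surjective.comp e.surjective)

@[ext]
structure Heisenberg (R ι : Type*) where
  u : ι → R
  v : ι → R
  c : R

namespace Heisenberg

section Ring

variable {R ι : Type*} [Ring R]

instance : One (Heisenberg R ι) := ⟨⟨0, 0, 0⟩⟩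

@[simp] lemma one_u : (1 : Heisenberg R ι).u = 0 := rfl
@[simp] lemma one_v : (1 : Heisenberg R ι).v = 0 := rfl
@[simp] lemma one_c : (1 : Heisenberg R ι).c = 0 := rfl

variable [Fintype ι]

instance : Mul (Heisenberg R ι) := ⟨fun x y => ⟨x.u + y.u, x.v + y.v, x.c + y.c + x.u ⬝ᵥ y.v⟩⟩

instance : Inv (Heisenberg R ι) := ⟨fun x => ⟨-x.u, -x.v, -x.c + x.u ⬝ᵥ x.v⟩⟩

@[simp] lemma mul_u (x y : Heisenberg R ι) : (x * y).u = x.u + y.u := rfl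
@[simp] lemma mul_v (x y : Heisenberg R ι) : (x * y).v = x.v + y.v := rfl
@[simp] lemma mul_c (x y : Heisenberg R ι) : (x * y).c = x.c + y.c + x.u ⬝ᵥ y.v := rfl
@[simp] lemma inv_u (x : Heisenberg R ι) : x⁻¹.u = -x.u := rfl
@[simp] lemma inv_v (x : Heisenberg R ι) : x⁻¹.v = -x.v := rfl
@[simp] lemma inv_c (x : Heisenberg R ι) : x⁻¹.c = -x.c + x.u ⬝ᵥ x.v := rfl

instance : Group (Heisenberg R ι) where
  mul_assoc x y z := by
    ext : 1 <;> simp only [mul_u, mul_v, mul_c, add_dotProduct, dotProduct_add] <;> abel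
  one_mul x := by ext : 1 <;> simp
  mul_one x := by ext : 1 <;> simp
  inv_mul_cancel x := by ext : 1 <;> simp

theorem mul_mul_inv_eq (g x : Heisenberg R ι) :
    g * x * g⁻¹ = ⟨x.u, x.v, x.c + (g.u ⬝ᵥ x.v - x.u ⬝ᵥ g.v)⟩ := by
  ext : 1 <;> simp only [mul_u, mul_v, mul_c, inv_u, inv_v, inv_c, add_dotProduct,
    dotProduct_neg] <;> abel

end Ring

section Field

variable {K ι : Type*} [Field K] [Fintype ι]

theorem exists_dotProduct_sub_dotProduct_eq {u v : ι → K} (h : (u, v) ≠ 0) (t : K) :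
    ∃ a b : ι → K, a ⬝ᵥ v - u ⬝ᵥ b = t := by
  classical
  by_cases hv : v = 0
  · obtain ⟨i, hi⟩ : ∃ i, u i ≠ 0 := Function.ne_iff.mp (show u ≠ 0 by simpa [hv] using h)
    exact ⟨0, Pi.single i (-t / u i), by rw [dotProduct_single, zero_dotProduct]; field_simp; ring⟩
  · obtain ⟨i, hi⟩ : ∃ i, v i ≠ 0 := Function.ne_iff.mp hv
    exact ⟨Pi.single i (t / v i), 0, by simp [single_dotProduct, hi]⟩

theorem isConj_iff {x y : Heisenberg K ι} :
    IsConj x y ↔ x.u = y.u ∧ x.v = y.v ∧ ((x.u, x.v) = 0 → x.c = y.c) := by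
  simp only [_root_.isConj_iff, mul_mul_inv_eq, Heisenberg.ext_iff]
  constructor
  · rintro ⟨g, hu, hv, hc⟩
    refine ⟨hu, hv, fun h => ?_⟩
    rw [← hc, (Prod.mk_eq_zero.mp h).1, (Prod.mk_eq_zero.mp h).2]
    simp
  · rintro ⟨hu, hv, hc⟩
    by_cases h : (x.u, x.v) = 0
    · exact ⟨1, hu, hv, by simp [← hc h]⟩
    · obtain ⟨a, b, hab⟩ := exists_dotProduct_sub_dotProduct_eq h (y.c - x.c)
      exact ⟨⟨a, b, 0⟩, hu, hv, by rw [hab]; abel⟩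

open Classical in
noncomputable def conjInvariant (x : Heisenberg K ι) :
    K ⊕ {p : (ι → K) × (ι → K) // p ≠ 0} :=
  if h : (x.u, x.v) = 0 then .inl x.c else .inr ⟨(x.u, x.v), h⟩

theorem isConj_iff_conjInvariant_eq {x y : Heisenberg K ι} :
    IsConj x y ↔ conjInvariant x = conjInvariant y := by
  rw [isConj_iff, conjInvariant, conjInvariant]
  split_ifs <;> aesop

theorem conjInvariant_surjective : Function.Surjective (conjInvariant (K := K) (ι := ι)) := by
  rintro (c | ⟨⟨u, v⟩, h⟩)
  · exact ⟨⟨0, 0, c⟩, by simp [conjInvariant]⟩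
  · exact ⟨⟨u, v, 0⟩, by simp [conjInvariant, h]⟩

theorem card_conjClasses_add_one [Finite K] :
    Nat.card (ConjClasses (Heisenberg K ι)) + 1 =
      Nat.card K + Nat.card K ^ (2 * Fintype.card ι) := by
  classical
  rw [Nat.card_conjClasses_eq_of_isConj_iff conjInvariant (fun _ _ => isConj_iff_conjInvariant_eq)
    conjInvariant_surjective, Nat.card_sum, add_assoc, ← Finite.card_option,
    Nat.card_congr (Equiv.optionSubtypeNe 0), Nat.card_prod, Nat.card_fun,
    Nat.card_eq_fintype_card (α := ι)]
  ring

end Field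

end Heisenberg

section CoordSub

variable {K : Type*} [Field K] {n : ℕ}

theorem mem_coordSub {m : ℕ} {v : Fin n → K} :
    v ∈ coordSub K n m ↔ ∀ j : Fin n, m ≤ (j : ℕ) → v j = 0 :=
  Iff.rfl

theorem forall_mulVec_mem_coordSub_iff {x : Matrix (Fin n) (Fin n) K} {m m' : ℕ} :
    (∀ v ∈ coordSub K n m, x *ᵥ v ∈ coordSub K n m') ↔
      ∀ i j : Fin n, (j : ℕ) < m → m' ≤ (i : ℕ) → x i j = 0 := by
  simp only [mem_coordSub]
  constructor
  · intro h i j hj hi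
    have hs : ∀ k : Fin n, m ≤ (k : ℕ) → (Pi.single j 1 : Fin n → K) k = 0 :=
      fun k hk => by rw [Pi.single_apply, if_neg (show k ≠ j by rintro rfl; omega)]
    simpa [mulVec_single] using h _ hs i hi
  · intro h v hv i hi
    simp only [mulVec, dotProduct]
    refine Finset.sum_eq_zero fun j _ => ?_
    rcases lt_or_ge (j : ℕ) m with hj | hj
    · simp [h i j hj hi]
    · simp [hv j hj]

theorem forall_le_sub_one_apply_eq_zero_iff {M : Matrix (Fin n) (Fin n) K} :
    (∀ i j, j ≤ i → (M - 1) i j = 0) ↔ (∀ i j, j < i → M i j = 0) ∧ ∀ i, M i i = 1 := by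
  simp only [le_iff_lt_or_eq, or_imp, forall_and, forall_eq, Matrix.sub_apply, one_apply_eq,
    sub_eq_zero]
  refine and_congr (forall₂_congr fun i j => imp_congr_right fun h => ?_) Iff.rfl
  rw [one_apply_ne h.ne']

theorem mem_flagU_iff {t : ℕ} {d : ℕ → ℕ} {h0 : d 0 = 0} {hd : Monotone d}
    {g : GL (Fin n) K} :
    g ∈ flagU K n t d h0 hd ↔ ∀ i j : Fin n,
      (∃ k ∈ Finset.Icc 1 t, (j : ℕ) < d k ∧ d (k - 1) ≤ (i : ℕ)) →
        ((g : Matrix (Fin n) (Fin n) K) - 1) i j = 0 := by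
  have hmem : g ∈ flagU K n t d h0 hd ↔ ∀ k ∈ Finset.Icc 1 t, ∀ v ∈ coordSub K n (d k),
      ((g : Matrix (Fin n) (Fin n) K) - 1) *ᵥ v ∈ coordSub K n (d (k - 1)) := by
    simp only [Finset.mem_Icc, and_imp]
    rfl
  simp only [hmem, forall_mulVec_mem_coordSub_iff]
  exact ⟨fun h i j ⟨k, hk, hj, hi⟩ => h k hk i j hj hi,
    fun h k hk i j hj hi => h i j ⟨k, hk, hj, hi⟩⟩

theorem mem_flagU_dV134_iff (g : GL (Fin 4) K) :
    g ∈ flagU K 4 3 dV134 dV134_zero dV134_mono ↔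
      ((∀ i j : Fin 4, j < i → (↑g : Matrix (Fin 4) (Fin 4) K) i j = 0) ∧
       (∀ i : Fin 4, (↑g : Matrix (Fin 4) (Fin 4) K) i i = 1) ∧
       (↑g : Matrix (Fin 4) (Fin 4) K) 1 2 = 0) := by
  have hpattern : ∀ i j : Fin 4, (∃ k ∈ Finset.Icc 1 3, (j : ℕ) < dV134 k ∧ dV134 (k - 1) ≤ i) ↔
      j ≤ i ∨ (i = 1 ∧ j = 2) := by
    decide
  simp only [mem_flagU_iff, hpattern, or_imp, forall_and, forall_le_sub_one_apply_eq_zero_iff,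
    and_imp, and_assoc]
  simp

end CoordSub

namespace Heisenberg

section Ring

variable {R : Type*} [Ring R]

def toMatrix (x : Heisenberg R (Fin 2)) : Matrix (Fin 4) (Fin 4) R :=
  !![1, x.u 0, x.u 1, x.c; 0, 1, 0, x.v 0; 0, 0, 1, x.v 1; 0, 0, 0, 1]

theorem toMatrix_injective : Function.Injective (toMatrix (R := R)) := by
  intro x y h
  have h' := fun i j => congrFun (congrFun h i) j
  ext i
  · fin_cases i
    exacts [h' 0 1, h' 0 2]
  · fin_cases i
    exacts [h' 1 3, h' 2 3]
  · exact h' 0 3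

def toMatrixHom : Heisenberg R (Fin 2) →* Matrix (Fin 4) (Fin 4) R where
  toFun := toMatrix
  map_one' := by
    ext i j
    fin_cases i <;> fin_cases j <;> rfl
  map_mul' x y := by
    ext i j
    fin_cases i <;> fin_cases j <;>
      simp [toMatrix, mul_apply, Fin.sum_univ_four, dotProduct, Fin.sum_univ_two, add_assoc,
        add_comm]

def toGL : Heisenberg R (Fin 2) →* GL (Fin 4) R :=
  toMatrixHom.toHomUnits

theorem toGL_injective : Function.Injective (toGL (R := R)) :=
  fun _ _ h => toMatrix_injective (congrArg Units.val h)

end Ring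

theorem range_toGL {K : Type*} [Field K] :
    (toGL (R := K)).range = flagU K 4 3 dV134 dV134_zero dV134_mono := by
  ext g
  rw [MonoidHom.mem_range, mem_flagU_dV134_iff]
  constructor
  · rintro ⟨x, rfl⟩
    refine ⟨fun i j hij => ?_, fun i => ?_, rfl⟩
    · fin_cases i <;> fin_cases j <;> first | rfl | exact absurd hij (by decide)
    · fin_cases i <;> rfl
  · rintro ⟨hlow, hdiag, h12⟩
    refine ⟨⟨![g 0 1, g 0 2], ![g 1 3, g 2 3], g 0 3⟩, Units.ext ?_⟩
    ext i j
    fin_cases i <;> fin_cases j <;>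
      simp [toGL, toMatrixHom, toMatrix, hdiag, h12, hlow]

end Heisenberg

theorem stmt12_general (q : ℕ)
    (K : Type u) [Field K] [Fintype K] (hcard : Fintype.card K = q) :
    (∀ g : GL (Fin 4) K, g ∈ flagU K 4 3 dV134 dV134_zero dV134_mono ↔
      ((∀ i j : Fin 4, j < i → (↑g : Matrix (Fin 4) (Fin 4) K) i j = 0) ∧
       (∀ i : Fin 4, (↑g : Matrix (Fin 4) (Fin 4) K) i i = 1) ∧
       (↑g : Matrix (Fin 4) (Fin 4) K) 1 2 = 0)) ∧
    (Nat.card (ConjClasses ↥(flagU K 4 3 dV134 dV134_zero dV134_mono)) : ℤ)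
      = ((q : ℤ) - 1) ^ 4 + 4 * ((q : ℤ) - 1) ^ 3 + 6 * ((q : ℤ) - 1) ^ 2
        + 5 * ((q : ℤ) - 1) + 1 := by
  refine ⟨mem_flagU_dV134_iff, ?_⟩
  let e : Heisenberg K (Fin 2) ≃* flagU K 4 3 dV134 dV134_zero dV134_mono :=
    (MonoidHom.ofInjective Heisenberg.toGL_injective).trans
      (MulEquiv.subgroupCongr Heisenberg.range_toGL)
  have hcount := Heisenberg.card_conjClasses_add_one (K := K) (ι := Fin 2)
  rw [e.card_conjClasses_eq, Nat.card_eq_fintype_card (α := K), hcard] at hcount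
  have hcount' : (Nat.card (ConjClasses (flagU K 4 3 dV134 dV134_zero dV134_mono)) : ℤ) + 1
      = q + q ^ 4 := by exact_mod_cast hcount
  linear_combination hcount'

/-- The unipotent radical `V` of the stabilizer of the flag `0 ⊆ F_q^1 ⊆ F_q^3 ⊆ F_q^4`
consists of the upper unitriangular matrices with `(2,3)`-entry zero, and its number of
conjugacy classes is `(q-1)^4 + 4(q-1)^3 + 6(q-1)^2 + 5(q-1) + 1`. -/
theorem stmt12 (q : ℕ) (hq : ∃ p k : ℕ, p.Prime ∧ 1 ≤ k ∧ q = p ^ k)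
    (K : Type u) [Field K] [Fintype K] (hcard : Fintype.card K = q) :
    (∀ g : GL (Fin 4) K, g ∈ flagU K 4 3 dV134 dV134_zero dV134_mono ↔
      ((∀ i j : Fin 4, j < i → (↑g : Matrix (Fin 4) (Fin 4) K) i j = 0) ∧
       (∀ i : Fin 4, (↑g : Matrix (Fin 4) (Fin 4) K) i i = 1) ∧
       (↑g : Matrix (Fin 4) (Fin 4) K) 1 2 = 0)) ∧
    (Nat.card (ConjClasses ↥(flagU K 4 3 dV134 dV134_zero dV134_mono)) : ℤ)
      = ((q : ℤ) - 1) ^ 4 + 4 * ((q : ℤ) - 1) ^ 3 + 6 * ((q : ℤ) - 1) ^ 2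
        + 5 * ((q : ℤ) - 1) + 1 :=
  stmt12_general q K hcard
end

section
/- Let f, g ∈ ℚ[X] with g ≠ 0, and suppose that for every prime power q one has g(q) ≠ 0 and f(q)/g(q) ∈ ℤ. Then g divides f in ℚ[X]; in particular, there is a polynomial h ∈ ℚ[X] such that f(q)/g(q) = h(q) for every prime power q. -/
/-!
Write `f = g * (f / g) + f % g` and pick an integer `b ≠ 0` clearing the denominators of `f / g`.
At a prime power `q`, `b (f % g)(q) / g(q) = b f(q) / g(q) - b (f / g)(q)` is an integer; since
`deg (f % g) < deg g` it tends to `0`, so it vanishes at all large primes and `f % g`, having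
infinitely many roots, is zero.
-/

open Polynomial Filter

namespace Polynomial

theorem eval_mod_div_eval {K : Type*} [Field K] (f g : K[X]) {x : K} (hx : g.eval x ≠ 0) :
    (f % g).eval x / g.eval x = f.eval x / g.eval x - (f / g).eval x := by
  rw [EuclideanDomain.mod_eq_sub_mul_div, eval_sub, eval_mul, sub_div, mul_div_cancel_left₀ _ hx]

theorem exists_int_mul_eval_intCast_eq_intCast (p : ℚ[X]) :
    ∃ b : ℤ, b ≠ 0 ∧ ∀ n : ℤ, ∃ m : ℤ, (b : ℚ) * p.eval (n : ℚ) = m := by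
  set P := IsLocalization.integerNormalization (nonZeroDivisors ℤ) p
  obtain ⟨b, hb, hP⟩ := IsLocalization.integerNormalization_spec (nonZeroDivisors ℤ) p
  refine ⟨b, nonZeroDivisors.ne_zero hb, fun n => ⟨P.eval n, ?_⟩⟩
  have := congrArg (eval (n : ℚ)) hP
  rw [eval_intCast_map, eval_smul, zsmul_eq_mul, algebraMap_int_eq, eq_intCast] at this
  exact this.symm

theorem eq_zero_of_degree_lt_of_frequently_div_eval_eq_intCast {𝕜 : Type*} [NormedField 𝕜]
    [LinearOrder 𝕜] [IsStrictOrderedRing 𝕜] [OrderTopology 𝕜] [Archimedean 𝕜] {r g : 𝕜[X]}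
    (hdeg : r.degree < g.degree)
    (h : ∃ᶠ n : ℕ in atTop, g.eval (n : 𝕜) ≠ 0 ∧ ∃ m : ℤ, r.eval (n : 𝕜) / g.eval (n : 𝕜) = m) :
    r = 0 := by
  have hsmall : ∀ᶠ n : ℕ in atTop, |r.eval (n : 𝕜) / g.eval (n : 𝕜)| < 1 :=
    ((div_tendsto_atTop_zero_of_degree_lt r g hdeg).abs.comp
      tendsto_natCast_atTop_atTop).eventually_lt_const (by simp)
  have hroot : ∃ᶠ n : ℕ in atTop, r.IsRoot (n : 𝕜) := by
    refine (h.and_eventually hsmall).mono ?_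
    rintro n ⟨⟨hg, m, hm⟩, hlt⟩
    rw [hm, ← Int.cast_abs, ← Int.cast_one, Int.cast_lt, Int.abs_lt_one_iff] at hlt
    rwa [hlt, Int.cast_zero, div_eq_zero_iff, or_iff_left hg] at hm
  refine eq_zero_of_infinite_isRoot r ?_
  exact (Nat.frequently_atTop_iff_infinite.mp hroot).image Nat.cast_injective.injOn |>.mono
    (by rintro _ ⟨n, hn, rfl⟩; exact hn)

end Polynomial

/-- A rational function in `q` that takes integer values at all prime powers is a polynomial:
if `g(q) ≠ 0` and `f(q)/g(q) ∈ ℤ` for all prime powers `q`, then `g ∣ f` in `ℚ[X]` and the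
quotient polynomial `h` satisfies `f(q)/g(q) = h(q)` at all prime powers. -/
theorem stmt16 (f g : Polynomial ℚ) (hg : g ≠ 0)
    (hint : ∀ q : ℕ, (∃ p k : ℕ, p.Prime ∧ 1 ≤ k ∧ q = p ^ k) →
      g.eval (q : ℚ) ≠ 0 ∧ ∃ z : ℤ, f.eval (q : ℚ) / g.eval (q : ℚ) = (z : ℚ)) :
    g ∣ f ∧ ∃ h : Polynomial ℚ, ∀ q : ℕ, (∃ p k : ℕ, p.Prime ∧ 1 ≤ k ∧ q = p ^ k) →
      f.eval (q : ℚ) / g.eval (q : ℚ) = h.eval (q : ℚ) := by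
  obtain ⟨b, hb, hbH⟩ := exists_int_mul_eval_intCast_eq_intCast (f / g)
  have hprimes : ∃ᶠ p : ℕ in atTop, ∃ p' k : ℕ, p'.Prime ∧ 1 ≤ k ∧ p = p' ^ k :=
    (Nat.frequently_atTop_iff_infinite.mpr Nat.infinite_setOfPred_prime).mono
      fun p hp => ⟨p, 1, hp, le_rfl, (pow_one p).symm⟩
  have hmod : C (b : ℚ) * (f % g) = 0 := by
    refine eq_zero_of_degree_lt_of_frequently_div_eval_eq_intCast (g := g) ?_ (hprimes.mono ?_)
    · rw [degree_C_mul (Int.cast_ne_zero.mpr hb)]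
      exact degree_mod_lt f hg
    · intro q hq
      obtain ⟨hgq, z, hz⟩ := hint q hq
      obtain ⟨m, hm⟩ := hbH q
      rw [Int.cast_natCast] at hm
      refine ⟨hgq, b * z - m, ?_⟩
      rw [eval_mul, eval_C, mul_div_assoc, eval_mod_div_eval f g hgq, hz, mul_sub, hm]
      norm_cast
  have hdvd : g ∣ f := by
    rwa [mul_eq_zero, C_eq_zero, Int.cast_eq_zero, or_iff_right hb,
      EuclideanDomain.mod_eq_zero] at hmod
  refine ⟨hdvd, f / g, fun q hq => ?_⟩
  conv_lhs => rw [← EuclideanDomain.mul_div_cancel' hg hdvd]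
  rw [eval_mul, mul_div_cancel_left₀ _ (hint q hq).1]
end
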